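/- Let d ≥ 2 be fixed, let (X_1, …, X_d) be a Latin hypercube sample of N = d points in [0,1)^d, and for ε ∈ (0, 1/d) set D(ε) = [0, (d−1)/d + ε)^d \ [0, (d−1)/d)^d. Then lim_{ε → 0+} P(X_1 ∈ D(ε), …, X_d ∈ D(ε)) / ∏_{i=1}^d P(X_i ∈ D(ε)) = (d!/d^d) · ((1 − 1/d)^d)^{1−d}. -/

import Mathlib

open MeasureTheory ProbabilityTheory Filter
open scoped ENNReal Classical

namespace LHSPaper

/-- The anchored box `[0,a) = ∏_i [0, a_i)` in `[0,1)^d`. -/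
def anchoredBox {d : ℕ} (a : Fin d → ℝ) : Set (Fin d → ℝ) := {x | ∀ i, x i ∈ Set.Ico 0 (a i)}

/-- `C^d_0`, the collection of anchored boxes `[0,a)` with `a ∈ [0,1]^d`. -/
def anchoredBoxes (d : ℕ) : Set (Set (Fin d → ℝ)) :=
  {S | ∃ a : Fin d → ℝ, (∀ i, a i ∈ Set.Icc (0 : ℝ) 1) ∧ S = anchoredBox a}

/-- `D^d_0`, the collection of differences `B \ A` of anchored boxes. -/
def boxDiffs (d : ℕ) : Set (Set (Fin d → ℝ)) :=
  {S | ∃ A ∈ anchoredBoxes d, ∃ B ∈ anchoredBoxes d, S = B \ A}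

/-- The half-open unit cube `[0,1)^d`. -/
def unitCube (d : ℕ) : Set (Fin d → ℝ) := {x | ∀ i, x i ∈ Set.Ico (0 : ℝ) 1}

/-- `γ`-negative dependence of the indicators of the events `A 1, …, A N`. -/
def GammaNegDep {Ω : Type*} [MeasurableSpace Ω] (μ : Measure Ω) {N : ℕ}
    (γ : ℝ≥0∞) (A : Fin N → Set Ω) : Prop :=
  ∀ J : Finset (Fin N), J.Nonempty →
    μ (⋂ j ∈ J, A j) ≤ γ * ∏ j ∈ J, μ (A j) ∧
    μ (⋂ j ∈ J, (A j)ᶜ) ≤ γ * ∏ j ∈ J, μ (A j)ᶜ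

/-- The `𝒮`-correlation number of a random point tuple `X`. -/
noncomputable def corrNum {Ω : Type*} [MeasurableSpace Ω] (μ : Measure Ω) {N d : ℕ}
    (𝒮 : Set (Set (Fin d → ℝ))) (X : Fin N → Ω → Fin d → ℝ) : ℝ≥0∞ :=
  ⨆ (S : Set (Fin d → ℝ)) (_ : S ∈ 𝒮) (J : Finset (Fin N)) (_ : J.Nonempty),
    max (μ (⋂ j ∈ J, {ω | X j ω ∈ S}) / ∏ j ∈ J, μ {ω | X j ω ∈ S})
        (μ (⋂ j ∈ J, {ω | X j ω ∉ S}) / ∏ j ∈ J, μ {ω | X j ω ∉ S})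

instance (N : ℕ) : MeasurableSpace (Equiv.Perm (Fin N)) := ⊤

instance (N : ℕ) : Nonempty (Equiv.Perm (Fin N)) := ⟨Equiv.refl _⟩

/-- Value types of the sources of randomness of a Latin hypercube sample:
`d` random permutations and `N·d` random reals. -/
def lhsβ (d N : ℕ) : (Fin d ⊕ (Fin N × Fin d)) → Type :=
  fun i => Sum.elim (fun _ => Equiv.Perm (Fin N)) (fun _ => ℝ) i

noncomputable def lhsMS (d N : ℕ) : (i : Fin d ⊕ (Fin N × Fin d)) → MeasurableSpace (lhsβ d N i) :=
  fun i => match i with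
  | .inl _ => ⊤
  | .inr _ => inferInstanceAs (MeasurableSpace ℝ)

def lhsFun {Ω : Type*} {d N : ℕ} (π : Fin d → Ω → Equiv.Perm (Fin N))
    (U : Fin N → Ω → Fin d → ℝ) : (i : Fin d ⊕ (Fin N × Fin d)) → Ω → lhsβ d N i :=
  fun i => match i with
  | .inl j => π j
  | .inr p => fun ω => U p.1 ω p.2

/-- `X` is a Latin hypercube sample of `N` points in `[0,1)^d`, built from the
uniformly distributed random permutations `π_j` and the uniformly distributed
random variables `U_{n,j}`, all mutually independent. -/
def IsLHS {Ω : Type*} [MeasurableSpace Ω] (μ : Measure Ω) (d N : ℕ)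
    (X : Fin N → Ω → Fin d → ℝ)
    (π : Fin d → Ω → Equiv.Perm (Fin N)) (U : Fin N → Ω → Fin d → ℝ) : Prop :=
  (∀ j, Measure.map (π j) μ = (PMF.uniformOfFintype (Equiv.Perm (Fin N))).toMeasure) ∧
  (∀ n j, Measure.map (fun ω => U n ω j) μ = volume.restrict (Set.Ico (0 : ℝ) 1)) ∧
  iIndepFun (m := lhsMS d N) (lhsFun π U) μ ∧
  (∀ n j ω, X n ω j = (((π j ω) n : ℕ) + U n ω j) / N)

/-- An elementary interval in base `b` of order `k` in `[0,1)^d`. -/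
def IsElemInterval (b d k : ℕ) (E : Set (Fin d → ℝ)) : Prop :=
  ∃ ℓ : Fin d → ℕ, ∃ a : Fin d → ℕ, (∀ i, a i < b ^ ℓ i) ∧ (∑ i, ℓ i = k) ∧
    E = {x | ∀ i, x i ∈ Set.Ico ((a i : ℝ) / b ^ ℓ i) (((a i : ℝ) + 1) / b ^ ℓ i)}

/-- A `(t,m,d)`-net in base `b`: `b^m` points in `[0,1)^d` such that every elementary
interval of order `m - t` contains exactly `b^t` points (with multiplicity). -/
def IsNet (b d m t : ℕ) (P : Fin (b ^ m) → Fin d → ℝ) : Prop :=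
  (∀ n, P n ∈ unitCube d) ∧
  ∀ E : Set (Fin d → ℝ), IsElemInterval b d (m - t) E →
    (Finset.univ.filter fun n => P n ∈ E).card = b ^ t

/-- A `b`-ary scrambling of depth `ℓ`: a self-map of `[0,1)` mapping, for each
`k ∈ {1,…,ℓ}`, elementary intervals of order `k` into elementary intervals of order `k`,
distinct ones into distinct ones. -/
def IsScrambling (b ℓ : ℕ) (σ : ℝ → ℝ) : Prop :=
  (∀ x ∈ Set.Ico (0 : ℝ) 1, σ x ∈ Set.Ico (0 : ℝ) 1) ∧
  ∀ k, 1 ≤ k → k ≤ ℓ → ∃ f : ℕ → ℕ,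
    (∀ a < b ^ k, f a < b ^ k) ∧
    (∀ a < b ^ k, ∀ a' < b ^ k, a ≠ a' → f a ≠ f a') ∧
    (∀ a < b ^ k, ∀ x ∈ Set.Ico ((a : ℝ) / b ^ k) (((a : ℝ) + 1) / b ^ k),
      σ x ∈ Set.Ico ((f a : ℝ) / b ^ k) (((f a : ℝ) + 1) / b ^ k))

/-- A basic cube of an abstract scrambled `(t,m,d)`-net in base `b`. -/
def IsBasicCube (b d m t : ℕ) (C : Set (Fin d → ℝ)) : Prop :=
  ∃ k : Fin d → ℕ, (∀ j, k j < b ^ (m - t)) ∧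
    C = {x | ∀ j, x j ∈ Set.Ico ((k j : ℝ) / b ^ (m - t)) (((k j : ℝ) + 1) / b ^ (m - t))}

/-- An abstract scrambled `(t,m,d)`-net in base `b`. -/
def IsAbstractScrambledNet {Ω : Type*} [MeasurableSpace Ω] (μ : Measure Ω)
    (b d m t : ℕ) (Y : Fin (b ^ m) → Ω → (Fin d → ℝ)) : Prop :=
  (∀ᵐ ω ∂μ, IsNet b d m t fun n => Y n ω) ∧
  (∀ i C, IsBasicCube b d m t C → μ {ω | Y i ω ∈ C} = ((b : ℝ≥0∞) ^ (d * (m - t)))⁻¹) ∧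
  (∀ M : Set (Fin d → ℝ), MeasurableSet M →
    ∀ J : Finset (Fin (b ^ m)), J.Nonempty →
    ∀ C : Fin (b ^ m) → Set (Fin d → ℝ), (∀ j ∈ J, IsBasicCube b d m t (C j)) →
      μ (⋂ j ∈ J, {ω | Y j ω ∈ C j}) ≠ 0 →
      (μ[|⋂ j ∈ J, {ω | Y j ω ∈ C j}]) (⋂ j ∈ J, {ω | Y j ω ∈ M}) =
        ∏ j ∈ J, volume (M ∩ C j) / volume (C j))

/-!
Coordinate `j` of point `n` is `(π_j n + U_{n,j}) / N`: the permutation chooses one of `N` strata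
of width `1/N` and the jitter `U_{n,j}` places the point inside it. Membership in an anchored cube
`[0,a)^d` is decided stratum by stratum, so the events below are, almost surely, finite disjoint
unions of cells `lhsCell` prescribing one value of each `π_j` and one jitter range per coordinate;
by independence a cell has probability `∏_j N⁻¹ · vol(T_j ∩ [0,1))`.

Summing over cells, every point is uniform on anchored cubes, so with `c = 1 - 1/d` one gets
`P(X_i ∈ D(ε)) = (c+ε)^d - c^d`. All `d` points lie in `D(ε)` exactly when every point owns the top
stratum of some coordinate, i.e. `j ↦ π_j⁻¹(d-1)` is a permutation `σ`, and `U_{σ j, j} < dε` for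
all `j`; hence `P(X_1, …, X_d ∈ D(ε)) = d! ε^d`. The ratio is then `d! (ε / ((c+ε)^d - c^d))^d`,
which tends to `d! (d c^{d-1})^{-d}` because `x ↦ x^d` has derivative `d c^{d-1}` at `c`.
-/

theorem card_perm_apply_eq_mul_card {α : Type*} [Fintype α] [DecidableEq α] (a b : α) :
    Fintype.card {σ : Equiv.Perm α // σ a = b} * Fintype.card α =
      Fintype.card (Equiv.Perm α) := by
  have hfiber : ∀ b', Fintype.card {σ : Equiv.Perm α // σ a = b'} =
      Fintype.card {σ : Equiv.Perm α // σ a = b} := fun b' =>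
    Fintype.card_congr <| (Equiv.mulLeft (Equiv.swap b' b)).subtypeEquiv fun σ => by
      simp [Equiv.swap_apply_eq_iff]
  calc _ = ∑ b', Fintype.card {σ : Equiv.Perm α // σ a = b'} := by simp [hfiber, mul_comm]
    _ = _ := by
      rw [← Fintype.card_sigma]
      exact Fintype.card_congr (Equiv.sigmaFiberEquiv fun σ : Equiv.Perm α => σ a)

theorem natCast_add_lt_natCast_add_iff {k m : ℕ} {u r : ℝ} (hu : u ∈ Set.Ico 0 1)
    (hr : r ∈ Set.Icc 0 1) : (k : ℝ) + u < m + r ↔ k < m ∨ k = m ∧ u < r := by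
  obtain ⟨hu0, hu1⟩ := hu
  obtain ⟨hr0, hr1⟩ := hr
  rcases lt_trichotomy k m with hkm | rfl | hkm
  · have : (k : ℝ) + 1 ≤ m := by exact_mod_cast hkm
    simp only [hkm, true_or, iff_true]
    linarith
  · simp
  · have : (m : ℝ) + 1 ≤ k := by exact_mod_cast hkm
    simp only [hkm.not_gt, hkm.ne', false_and, or_self, iff_false, not_lt]
    linarith

theorem forall_exists_apply_eq_iff_exists_perm {α : Type*} [Finite α] (P : α → Equiv.Perm α)
    (t : α) (Q : α → α → Prop) :
    (∀ n, (∃ j, P j n = t) ∧ ∀ j, P j n = t → Q n j) ↔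
      ∃ σ : Equiv.Perm α, ∀ j, P j (σ j) = t ∧ Q (σ j) j := by
  constructor
  · intro H
    have hsurj : Function.Surjective fun j => (P j).symm t := fun n => by
      obtain ⟨j, hj⟩ := (H n).1
      exact ⟨j, by simp [← hj]⟩
    refine ⟨Equiv.ofBijective _ hsurj.bijective_of_finite, fun j => ?_⟩
    have hj : P j ((P j).symm t) = t := Equiv.apply_symm_apply _ _
    exact ⟨hj, (H _).2 j hj⟩
  · rintro ⟨σ, hσ⟩ n
    refine ⟨⟨σ.symm n, by simpa using (hσ (σ.symm n)).1⟩, fun j hj => ?_⟩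
    obtain rfl : n = σ j := (P j).injective (hj.trans (hσ j).1.symm)
    exact (hσ j).2

theorem tendsto_div_pow_add_sub_pow (c : ℝ) (n : ℕ) (hc : (n : ℝ) * c ^ (n - 1) ≠ 0) :
    Tendsto (fun ε => ε / ((c + ε) ^ n - c ^ n)) (nhdsWithin 0 {0}ᶜ)
      (nhds ((n * c ^ (n - 1))⁻¹)) := by
  have hderiv : HasDerivAt (fun x => (c + x) ^ n) (n * c ^ (n - 1)) 0 := by
    simpa using ((hasDerivAt_id (0 : ℝ)).const_add c).fun_pow n
  refine ((hasDerivAt_iff_tendsto_slope.mp hderiv).inv₀ hc).congr fun ε => ?_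
  simp [slope_def_field]

theorem inv_natCast_mul_pow_pred_pow (x : ℝ) {n : ℕ} (hn : 1 ≤ n) :
    ((n * x ^ (n - 1))⁻¹) ^ n = ((n : ℝ) ^ n)⁻¹ * (x ^ n) ^ ((1 : ℤ) - n) := by
  have hexp : (1 : ℤ) - n = -((n - 1 : ℕ) : ℤ) := by omega
  rw [hexp, zpow_neg, zpow_natCast, ← pow_mul, mul_comm n, pow_mul, mul_inv, mul_pow, inv_pow,
    inv_pow]

theorem sum_volume_stratum {N m : ℕ} (hm : m < N) {r : ℝ} (hr : r ∈ Set.Icc 0 1) :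
    ∑ k : Fin N, volume ({u : ℝ | (k : ℕ) < m ∨ (k : ℕ) = m ∧ u < r} ∩ Set.Ico 0 1) =
      m + ENNReal.ofReal r := by
  have hterm : ∀ k : Fin N,
      volume ({u : ℝ | (k : ℕ) < m ∨ (k : ℕ) = m ∧ u < r} ∩ Set.Ico 0 1) =
        (if (k : ℕ) < m then 1 else 0) + if k = ⟨m, hm⟩ then ENNReal.ofReal r else 0 := by
    intro k
    rcases lt_trichotomy (k : ℕ) m with hkm | hkm | hkm
    · simp [hkm, hkm.ne, Fin.ext_iff]
    · have hIco : {u : ℝ | u < r} ∩ Set.Ico 0 1 = Set.Ico 0 r := by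
        rw [Set.inter_comm, Set.Iio_def, Set.Ico_inter_Iio, min_eq_right hr.2]
      simp [hkm, Fin.ext_iff, hIco]
    · simp [hkm.not_gt, hkm.ne', Fin.ext_iff]
  simp only [hterm, Finset.sum_add_distrib, Finset.sum_boole, Fin.card_filter_val_lt,
    Finset.sum_ite_eq', Finset.mem_univ, if_true]
  simp [hm.le]

def lhsCell {Ω : Type*} {d N : ℕ} (π : Fin d → Ω → Equiv.Perm (Fin N))
    (U : Fin N → Ω → Fin d → ℝ) (p v : Fin d → Fin N) (T : Fin d → Set ℝ) : Set Ω :=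
  {ω | ∀ j, π j ω (p j) = v j ∧ U (p j) ω j ∈ T j}

theorem apply_eq_iff_of_mem_lhsCell {Ω : Type*} {d N : ℕ} {π : Fin d → Ω → Equiv.Perm (Fin N)}
    {U : Fin N → Ω → Fin d → ℝ} {p v p' v' : Fin d → Fin N} {T T' : Fin d → Set ℝ} {ω : Ω}
    (hω : ω ∈ lhsCell π U p v T) (hω' : ω ∈ lhsCell π U p' v' T') (j : Fin d) :
    p j = p' j ↔ v j = v' j := by
  rw [← (hω j).1, ← (hω' j).1, (π j ω).injective.eq_iff]

namespace IsLHS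

section

variable {Ω : Type*} [MeasurableSpace Ω] {μ : Measure Ω} {d N : ℕ}
  {X : Fin N → Ω → Fin d → ℝ} {π : Fin d → Ω → Equiv.Perm (Fin N)}
  {U : Fin N → Ω → Fin d → ℝ}

theorem aemeasurable_perm (h : IsLHS μ d N X π U) (j : Fin d) : AEMeasurable (π j) μ :=
  .of_map_ne_zero <| by rw [h.1 j]; exact IsProbabilityMeasure.ne_zero _

theorem aemeasurable_jitter (h : IsLHS μ d N X π U) (n : Fin N) (j : Fin d) :
    AEMeasurable (fun ω => U n ω j) μ :=
  .of_map_ne_zero <| by simp [h.2.1 n j]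

theorem aemeasurable_coord (h : IsLHS μ d N X π U) (n : Fin N) (j : Fin d) :
    AEMeasurable (fun ω => X n ω j) μ := by
  simp only [h.2.2.2 n j]
  have hperm : AEMeasurable (fun ω => ((π j ω n : ℕ) : ℝ)) μ :=
    (measurable_from_top (f := fun σ : Equiv.Perm (Fin N) => ((σ n : ℕ) : ℝ))).comp_aemeasurable
      (h.aemeasurable_perm j)
  exact (hperm.add (h.aemeasurable_jitter n j)).div_const _

theorem measure_perm_apply_eq (h : IsLHS μ d N X π U) (j : Fin d) (a b : Fin N) :
    μ {ω | π j ω a = b} = (N : ℝ≥0∞)⁻¹ := by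
  change μ (π j ⁻¹' {σ | σ a = b}) = _
  rw [← Measure.map_apply_of_aemeasurable (h.aemeasurable_perm j)
      MeasurableSpace.measurableSet_top, h.1 j,
    PMF.toMeasure_uniformOfFintype_apply _ MeasurableSpace.measurableSet_top]
  set k := Fintype.card {σ : Equiv.Perm (Fin N) // σ a = b}
  have hk : Fintype.card {σ : Equiv.Perm (Fin N) | σ a = b} = k :=
    Fintype.card_congr (Equiv.refl _)
  have hk0 : (k : ℝ≥0∞) ≠ 0 := by
    have : 0 < k := Fintype.card_pos_iff.2 ⟨⟨Equiv.swap a b, Equiv.swap_apply_left a b⟩⟩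
    exact_mod_cast this.ne'
  rw [hk, ← card_perm_apply_eq_mul_card a b, Fintype.card_fin, Nat.cast_mul,
    ← mul_one (k : ℝ≥0∞), mul_assoc, one_mul,
    ENNReal.mul_div_mul_left _ _ hk0 (ENNReal.natCast_ne_top k), one_div]

theorem measure_jitter_mem (h : IsLHS μ d N X π U) (n : Fin N) (j : Fin d) {T : Set ℝ}
    (hT : MeasurableSet T) : μ {ω | U n ω j ∈ T} = volume (T ∩ Set.Ico 0 1) := by
  change μ ((fun ω => U n ω j) ⁻¹' T) = _
  rw [← Measure.map_apply_of_aemeasurable (h.aemeasurable_jitter n j) hT, h.2.1 n j,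
    Measure.restrict_apply hT]

theorem ae_jitter_mem_Ico (h : IsLHS μ d N X π U) : ∀ᵐ ω ∂μ, ∀ n j, U n ω j ∈ Set.Ico 0 1 := by
  refine ae_all_iff.2 fun n => ae_all_iff.2 fun j => ae_iff.2 ?_
  simpa using h.measure_jitter_mem n j (measurableSet_Ico (a := (0 : ℝ)) (b := 1)).compl

theorem measure_lhsCell (h : IsLHS μ d N X π U) (p v : Fin d → Fin N) {T : Fin d → Set ℝ}
    (hT : ∀ j, MeasurableSet (T j)) :
    μ (lhsCell π U p v T) = ∏ j, ((N : ℝ≥0∞)⁻¹ * volume (T j ∩ Set.Ico 0 1)) := by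
  let e : Fin d ⊕ Fin d → Fin d ⊕ (Fin N × Fin d) := Sum.elim Sum.inl fun j => .inr (p j, j)
  have he : e.Injective := by
    rintro (i | i) (j | j) hij <;> simp_all [e]
  let s : Fin d ⊕ Fin d → Set Ω :=
    Sum.elim (fun j => {ω | π j ω (p j) = v j}) fun j => {ω | U (p j) ω j ∈ T j}
  have hs : ∀ i, MeasurableSet[(lhsMS d N (e i)).comap (lhsFun π U (e i))] (s i)
    | .inl j =>
      ⟨({σ | σ (p j) = v j} : Set (Equiv.Perm (Fin N))), MeasurableSpace.measurableSet_top, rfl⟩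
    | .inr j => ⟨T j, hT j, rfl⟩
  have hcell : lhsCell π U p v T = ⋂ i, s i := by
    ext ω
    simp [lhsCell, s, Set.iInter_sum, forall_and]
  rw [hcell, (h.2.2.1.precomp he).meas_iInter hs, Fintype.prod_sum_type,
    ← Finset.prod_mul_distrib]
  simp [s, h.measure_perm_apply_eq, h.measure_jitter_mem _ _ (hT _)]

theorem nullMeasurableSet_lhsCell (h : IsLHS μ d N X π U) (p v : Fin d → Fin N)
    {T : Fin d → Set ℝ} (hT : ∀ j, MeasurableSet (T j)) :
    NullMeasurableSet (lhsCell π U p v T) μ := by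
  have hcell : lhsCell π U p v T =
      ⋂ j, (π j ⁻¹' {σ | σ (p j) = v j} ∩ (fun ω => U (p j) ω j) ⁻¹' T j) := by
    ext ω
    simp [lhsCell]
  rw [hcell]
  exact .iInter fun j =>
    ((h.aemeasurable_perm j).nullMeasurableSet_preimage MeasurableSpace.measurableSet_top).inter
      ((h.aemeasurable_jitter _ j).nullMeasurableSet_preimage (hT j))

theorem measure_iUnion_lhsCell (h : IsLHS μ d N X π U) {κ : Type*} [Fintype κ]
    (p v : κ → Fin d → Fin N) {T : κ → Fin d → Set ℝ} (hT : ∀ k j, MeasurableSet (T k j))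
    (hdisj : Pairwise (Function.onFun Disjoint fun k => lhsCell π U (p k) (v k) (T k))) :
    μ (⋃ k, lhsCell π U (p k) (v k) (T k)) =
      ∑ k, ∏ j, ((N : ℝ≥0∞)⁻¹ * volume (T k j ∩ Set.Ico 0 1)) := by
  rw [measure_iUnion₀ (hdisj.mono fun _ _ h => h.aedisjoint)
    (fun k => h.nullMeasurableSet_lhsCell _ _ (hT k)), tsum_fintype]
  simp [h.measure_lhsCell _ _ (hT _)]

theorem nullMeasurableSet_mem_anchoredBox (h : IsLHS μ d N X π U) (n : Fin N) (a : Fin d → ℝ) :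
    NullMeasurableSet {ω | X n ω ∈ anchoredBox a} μ := by
  have hbox : {ω | X n ω ∈ anchoredBox a} = ⋂ j, (fun ω => X n ω j) ⁻¹' Set.Ico 0 (a j) := by
    ext ω
    simp [anchoredBox]
  rw [hbox]
  exact .iInter fun j => (h.aemeasurable_coord n j).nullMeasurableSet_preimage measurableSet_Ico

theorem mem_anchoredBox_iff (h : IsLHS μ d N X π U) {n : Fin N} {ω : Ω}
    (hU : ∀ j, U n ω j ∈ Set.Ico 0 1) {a r : ℝ} {m : ℕ} (ha : N * a = m + r)
    (hr : r ∈ Set.Icc 0 1) :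
    X n ω ∈ anchoredBox (fun _ => a) ↔
      ∀ j, (π j ω n : ℕ) < m ∨ (π j ω n : ℕ) = m ∧ U n ω j < r := by
  have hN : (0 : ℝ) < N := by exact_mod_cast n.pos
  refine forall_congr' fun j => ?_
  have hU0 := (hU j).1
  rw [h.2.2.2 n j ω, Set.mem_Ico, div_lt_iff₀' hN, ha, natCast_add_lt_natCast_add_iff (hU j) hr,
    and_iff_right (by positivity)]

theorem measure_mem_anchoredBox_of_mul_eq (h : IsLHS μ d N X π U) (n : Fin N) {a r : ℝ} {m : ℕ}
    (hm : m < N) (hr : r ∈ Set.Icc 0 1) (ha : N * a = m + r) :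
    μ {ω | X n ω ∈ anchoredBox (fun _ => a)} = ENNReal.ofReal a ^ d := by
  let T : Fin N → Set ℝ := fun k => {u | (k : ℕ) < m ∨ (k : ℕ) = m ∧ u < r}
  have hT : ∀ k, MeasurableSet (T k) := fun k =>
    (MeasurableSet.const _).union ((MeasurableSet.const _).inter measurableSet_Iio)
  have hae : {ω | X n ω ∈ anchoredBox (fun _ => a)} =ᵐ[μ]
      ⋃ t : Fin d → Fin N, lhsCell π U (fun _ => n) t (fun j => T (t j)) := by
    filter_upwards [h.ae_jitter_mem_Ico] with ω hω
    refine propext ?_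
    change X n ω ∈ anchoredBox (fun _ => a) ↔ ω ∈ ⋃ t, _
    simp only [Set.mem_iUnion, lhsCell, Set.mem_ofPred_eq, h.mem_anchoredBox_iff (hω n) ha hr]
    exact ⟨fun H => ⟨fun j => π j ω n, fun j => ⟨rfl, H j⟩⟩,
      fun ⟨t, ht⟩ j => (ht j).1 ▸ (ht j).2⟩
  have hdisj : Pairwise (Function.onFun Disjoint fun t : Fin d → Fin N =>
      lhsCell π U (fun _ => n) t (fun j => T (t j))) := fun t t' hne =>
    Set.disjoint_left.2 fun ω hω hω' =>
      hne (funext fun j => (apply_eq_iff_of_mem_lhsCell hω hω' j).1 rfl)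
  have hN : (0 : ℝ) < N := by exact_mod_cast n.pos
  have hcoord : (N : ℝ≥0∞)⁻¹ * (m + ENNReal.ofReal r) = ENNReal.ofReal a := by
    have ha' : a = (m + r) / N := by rw [← ha]; field_simp
    rw [ha', ENNReal.ofReal_div_of_pos hN,
      ENNReal.ofReal_add (Nat.cast_nonneg m) hr.1, ENNReal.ofReal_natCast, ENNReal.ofReal_natCast,
      ENNReal.div_eq_inv_mul]
  rw [measure_congr hae, h.measure_iUnion_lhsCell _ _ (fun _ _ => hT _) hdisj,
    ← Fintype.prod_sum (fun _ k => (N : ℝ≥0∞)⁻¹ * volume (T k ∩ Set.Ico 0 1))]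
  simp only [← Finset.mul_sum, T, sum_volume_stratum hm hr, hcoord, Finset.prod_const,
    Finset.card_univ, Fintype.card_fin]

theorem measure_mem_anchoredBox (h : IsLHS μ d N X π U) (n : Fin N) {a : ℝ}
    (ha : a ∈ Set.Icc 0 1) :
    μ {ω | X n ω ∈ anchoredBox (fun _ => a)} = ENNReal.ofReal a ^ d := by
  have hN : (0 : ℝ) < N := by exact_mod_cast n.pos
  rcases ha.2.lt_or_eq with ha1 | rfl
  · have hNa : 0 ≤ N * a := mul_nonneg hN.le ha.1
    refine h.measure_mem_anchoredBox_of_mul_eq n (m := ⌊N * a⌋₊) (r := N * a - ⌊N * a⌋₊) ?_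
      ⟨sub_nonneg.2 (Nat.floor_le hNa), by linarith [Nat.lt_floor_add_one (N * a)]⟩ (by ring)
    rw [Nat.floor_lt hNa]
    nlinarith
  · exact h.measure_mem_anchoredBox_of_mul_eq n (m := N - 1) (r := 1) (by have := n.pos; omega)
      ⟨zero_le_one, le_rfl⟩ (by rw [Nat.cast_sub (by exact_mod_cast n.pos)]; ring)

theorem measure_mem_anchoredBox_sdiff (h : IsLHS μ d N X π U) (n : Fin N) {a b : ℝ}
    (hb : 0 ≤ b) (hba : b ≤ a) (ha : a ≤ 1) :
    μ {ω | X n ω ∈ anchoredBox (fun _ => a) \ anchoredBox (fun _ => b)} =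
      ENNReal.ofReal (a ^ d - b ^ d) := by
  have hsub : {ω | X n ω ∈ anchoredBox (fun _ => b)} ⊆ {ω | X n ω ∈ anchoredBox (fun _ => a)} :=
    fun ω hω j => ⟨(hω j).1, (hω j).2.trans_le hba⟩
  have hB := h.measure_mem_anchoredBox n ⟨hb, hba.trans ha⟩
  change μ ({ω | X n ω ∈ anchoredBox (fun _ => a)} \ {ω | X n ω ∈ anchoredBox (fun _ => b)}) = _
  rw [measure_sdiff hsub (h.nullMeasurableSet_mem_anchoredBox n _) (by simp [hB]), hB,
    h.measure_mem_anchoredBox n ⟨hb.trans hba, ha⟩, ENNReal.ofReal_sub _ (pow_nonneg hb d),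
    ENNReal.ofReal_pow (hb.trans hba), ENNReal.ofReal_pow hb]

theorem mem_anchoredBox_sdiff_iff (h : IsLHS μ d N X π U) {n : Fin N} {ω : Ω}
    (hU : ∀ j, U n ω j ∈ Set.Ico 0 1) {t : Fin N} (ht : (t : ℕ) = N - 1) {ε : ℝ}
    (hε : 0 ≤ ε) (hεN : N * ε ≤ 1) :
    X n ω ∈ anchoredBox (fun _ => ((N : ℝ) - 1) / N + ε) \
        anchoredBox (fun _ => ((N : ℝ) - 1) / N) ↔
      (∃ j, π j ω n = t) ∧ ∀ j, π j ω n = t → U n ω j < N * ε := by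
  have hN : (0 : ℝ) < N := by exact_mod_cast n.pos
  have hcast : ((N - 1 : ℕ) : ℝ) = N - 1 := by rw [Nat.cast_sub n.pos, Nat.cast_one]
  have hupper : (N : ℝ) * (((N : ℝ) - 1) / N + ε) = (N - 1 : ℕ) + N * ε := by
    rw [hcast]; field_simp
  have hlower : (N : ℝ) * (((N : ℝ) - 1) / N) = (N - 1 : ℕ) + 0 := by
    rw [hcast, add_zero]; field_simp
  rw [Set.mem_sdiff, h.mem_anchoredBox_iff hU hupper ⟨by positivity, hεN⟩,
    h.mem_anchoredBox_iff hU hlower ⟨le_rfl, zero_le_one⟩]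
  have hlt : ∀ j, (π j ω n : ℕ) < N := fun j => (π j ω n).isLt
  have hU0 : ∀ j, 0 ≤ U n ω j := fun j => (hU j).1
  simp only [Fin.ext_iff, ht]
  grind

end

theorem measure_forall_mem_sdiff {Ω : Type*} [MeasurableSpace Ω] {μ : Measure Ω} {d : ℕ}
    {X : Fin d → Ω → Fin d → ℝ} {π : Fin d → Ω → Equiv.Perm (Fin d)}
    {U : Fin d → Ω → Fin d → ℝ} (h : IsLHS μ d d X π U) (hd : 0 < d) {ε : ℝ} (hε : 0 ≤ ε)
    (hεd : d * ε ≤ 1) :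
    μ {ω | ∀ n, X n ω ∈ anchoredBox (fun _ => ((d : ℝ) - 1) / d + ε) \
        anchoredBox (fun _ => ((d : ℝ) - 1) / d)} = d.factorial * ENNReal.ofReal ε ^ d := by
  have hdR : (0 : ℝ) < d := by exact_mod_cast hd
  let top : Fin d := ⟨d - 1, by omega⟩
  have hae : {ω | ∀ n, X n ω ∈ anchoredBox (fun _ => ((d : ℝ) - 1) / d + ε) \
        anchoredBox (fun _ => ((d : ℝ) - 1) / d)} =ᵐ[μ]
      ⋃ σ : Equiv.Perm (Fin d), lhsCell π U σ (fun _ => top) (fun _ => Set.Iio (d * ε)) := by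
    filter_upwards [h.ae_jitter_mem_Ico] with ω hω
    refine propext ?_
    change (∀ n, _) ↔ ω ∈ ⋃ σ, _
    simp only [Set.mem_iUnion, lhsCell, Set.mem_ofPred_eq, Set.mem_Iio,
      h.mem_anchoredBox_sdiff_iff (hω _) (t := top) rfl hε hεd]
    exact forall_exists_apply_eq_iff_exists_perm (fun j => π j ω) top fun n j => U n ω j < d * ε
  have hdisj : Pairwise (Function.onFun Disjoint fun σ : Equiv.Perm (Fin d) =>
      lhsCell π U σ (fun _ => top) (fun _ => Set.Iio (d * ε))) := fun σ σ' hne =>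
    Set.disjoint_left.2 fun ω hω hω' =>
      hne (Equiv.ext fun j => (apply_eq_iff_of_mem_lhsCell hω hω' j).2 rfl)
  have hvol : volume (Set.Iio ((d : ℝ) * ε) ∩ Set.Ico 0 1) = ENNReal.ofReal (d * ε) := by
    rw [Set.inter_comm, Set.Ico_inter_Iio, min_eq_right hεd, Real.volume_Ico, sub_zero]
  rw [measure_congr hae, h.measure_iUnion_lhsCell _ _ (fun _ _ => measurableSet_Iio) hdisj]
  simp only [hvol, Finset.prod_const, Finset.sum_const, Finset.card_univ, Fintype.card_fin,
    Fintype.card_perm, nsmul_eq_mul, ENNReal.ofReal_mul hdR.le, ENNReal.ofReal_natCast,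
    ← mul_assoc, ENNReal.inv_mul_cancel (Nat.cast_ne_zero.2 hd.ne') (ENNReal.natCast_ne_top d),
    one_mul]

end IsLHS

theorem stmt5_general {Ω : Type*} [MeasurableSpace Ω] (μ : Measure Ω)
    (d : ℕ) (hd : 2 ≤ d)
    (X : Fin d → Ω → Fin d → ℝ) (π : Fin d → Ω → Equiv.Perm (Fin d))
    (U : Fin d → Ω → Fin d → ℝ) (h : IsLHS μ d d X π U)
    (D : ℝ → Set (Fin d → ℝ))
    (hD : ∀ ε : ℝ, D ε = anchoredBox (fun _ => ((d : ℝ) - 1) / d + ε) \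
                        anchoredBox (fun _ => ((d : ℝ) - 1) / d)) :
    Filter.Tendsto
      (fun ε : ℝ =>
        (μ {ω | ∀ n, X n ω ∈ D ε}).toReal / ∏ i : Fin d, (μ {ω | X i ω ∈ D ε}).toReal)
      (nhdsWithin 0 (Set.Ioi 0))
      (nhds ((d.factorial : ℝ) / d ^ d * ((1 - 1 / (d : ℝ)) ^ d) ^ ((1 : ℤ) - d))) := by
  have hdR : (0 : ℝ) < d := by positivity
  have hd2 : (2 : ℝ) ≤ d := by exact_mod_cast hd
  have hc0 : 0 < ((d : ℝ) - 1) / d := div_pos (by linarith) hdR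
  have hratio : ∀ ε ∈ Set.Ioo (0 : ℝ) (1 / d),
      (μ {ω | ∀ n, X n ω ∈ D ε}).toReal / ∏ i : Fin d, (μ {ω | X i ω ∈ D ε}).toReal =
        d.factorial * (ε / ((((d : ℝ) - 1) / d + ε) ^ d - (((d : ℝ) - 1) / d) ^ d)) ^ d := by
    rintro ε ⟨hε, hεd⟩
    have hεd' : d * ε ≤ 1 := by rw [lt_div_iff₀ hdR] at hεd; linarith
    have hc1 : ((d : ℝ) - 1) / d + ε ≤ 1 := by
      rw [div_add' _ _ _ hdR.ne', div_le_one hdR]; linarith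
    simp only [hD, h.measure_forall_mem_sdiff (by omega) hε.le hεd',
      h.measure_mem_anchoredBox_sdiff _ hc0.le (le_add_of_nonneg_right hε.le) hc1,
      Finset.prod_const, Finset.card_univ, Fintype.card_fin]
    rw [ENNReal.toReal_mul, ENNReal.toReal_pow, ENNReal.toReal_ofReal hε.le,
      ENNReal.toReal_natCast, ENNReal.toReal_ofReal (sub_nonneg.2 (by gcongr; linarith)),
      mul_div_assoc, ← div_pow]
  have hlim := (((tendsto_div_pow_add_sub_pow (((d : ℝ) - 1) / d) d (by positivity)).mono_left
    (nhdsWithin_mono _ fun _ hx => ne_of_gt hx)).pow d).const_mul (d.factorial : ℝ)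
  rw [show 1 - 1 / (d : ℝ) = ((d : ℝ) - 1) / d by field_simp, div_eq_mul_inv, mul_assoc,
    ← inv_natCast_mul_pow_pred_pow _ (by omega)]
  refine hlim.congr' ?_
  filter_upwards [Ioo_mem_nhdsGT (by positivity : (0 : ℝ) < 1 / d)] with ε hε
  exact (hratio ε hε).symm

/-- For a LHS of `N = d` points in `[0,1)^d` and
`D(ε) = [0,(d-1)/d+ε)^d \ [0,(d-1)/d)^d`, the ratio
`P(X_1,…,X_d ∈ D(ε)) / ∏_i P(X_i ∈ D(ε))` tends to `(d!/d^d)·((1-1/d)^d)^{1-d}`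
as `ε → 0⁺`. -/
theorem stmt5 {Ω : Type*} [MeasurableSpace Ω] (μ : Measure Ω) [IsProbabilityMeasure μ]
    (d : ℕ) (hd : 2 ≤ d)
    (X : Fin d → Ω → Fin d → ℝ) (π : Fin d → Ω → Equiv.Perm (Fin d))
    (U : Fin d → Ω → Fin d → ℝ) (h : IsLHS μ d d X π U)
    (D : ℝ → Set (Fin d → ℝ))
    (hD : ∀ ε : ℝ, D ε = anchoredBox (fun _ => ((d : ℝ) - 1) / d + ε) \
                        anchoredBox (fun _ => ((d : ℝ) - 1) / d)) :
    Filter.Tendsto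
      (fun ε : ℝ =>
        (μ {ω | ∀ n, X n ω ∈ D ε}).toReal / ∏ i : Fin d, (μ {ω | X i ω ∈ D ε}).toReal)
      (nhdsWithin 0 (Set.Ioi 0))
      (nhds ((d.factorial : ℝ) / d ^ d * ((1 - 1 / (d : ℝ)) ^ d) ^ ((1 : ℤ) - d))) :=
  stmt5_general μ d hd X π U h D hD

end LHSPaper
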